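/- For each n ≥ 1 let Rₙ be the n×n all-ones matrix (Toeplitz with symbol R_k = 1 for all k) and let R̂ₙ be the n×n Toeplitz matrix with diagonal entries 1 and all off-diagonal entries 1/2 (symbol R̂₀ = 1, R̂_k = 1/2 for k ≥ 1). Then δ_T(Rₙ, R̂ₙ) → 1 as n → ∞, where δ_T(M₁, M₂) := min{ q₀ + q̂₀ : Q, Q̂ positive semidefinite symmetric Toeplitz n×n matrices with constant diagonal entries q₀, q̂₀, satisfying M₁ + Q = M₂ + Q̂ }. -/

import Mathlib

open Matrix Finset

/-- A matrix is Toeplitz if its `(i,j)` entry depends only on `i - j`. -/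
def IsToeplitz {n : ℕ} {α : Type*} (M : Matrix (Fin n) (Fin n) α) : Prop :=
  ∀ i j i' j' : Fin n, (i : ℤ) - (j : ℤ) = (i' : ℤ) - (j' : ℤ) → M i j = M i' j'

/-- The `n×n` all-ones matrix (symbol `R_k = 1` for all `k`). -/
def allOnes (n : ℕ) : Matrix (Fin n) (Fin n) ℝ := Matrix.of fun _ _ => 1

/-- The `n×n` Toeplitz matrix with diagonal `1` and off-diagonal entries `1/2`
(symbol `R̂₀ = 1`, `R̂_k = 1/2` for `k ≥ 1`). -/
noncomputable def halfOffDiag (n : ℕ) : Matrix (Fin n) (Fin n) ℝ :=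
  Matrix.of fun i j => if i = j then 1 else 1/2

/-- The Toeplitz covariance distance: the minimal combined diagonal `q₀ + q̂₀`
of positive semidefinite symmetric Toeplitz perturbations `Q, Q̂` with
`M₁ + Q = M₂ + Q̂`.  (Matrices of size `n + 1`, covering all sizes `n ≥ 1`.) -/
noncomputable def deltaT (n : ℕ) (M₁ M₂ : Matrix (Fin (n + 1)) (Fin (n + 1)) ℝ) : ℝ :=
  sInf {x : ℝ | ∃ Q Qhat : Matrix (Fin (n + 1)) (Fin (n + 1)) ℝ,
    Q.PosSemidef ∧ IsToeplitz Q ∧ Qhat.PosSemidef ∧ IsToeplitz Qhat ∧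
    M₁ + Q = M₂ + Qhat ∧ x = Q 0 0 + Qhat 0 0}

lemma quad_pair {m : ℕ} (M : Matrix (Fin m) (Fin m) ℝ) (hM : M.PosSemidef) (i j : Fin m) :
    0 ≤ M i i + M j j - M i j - M j i := by
  have h := hM.dotProduct_mulVec_nonneg (Pi.single i 1 - Pi.single j 1)
  have hv : M *ᵥ (Pi.single i 1 - Pi.single j 1) = fun k => M k i - M k j := by
    funext k
    simp [mulVec, dotProduct, mul_sub, Finset.sum_sub_distrib, Pi.single_apply]
  rw [hv] at h
  simp [dotProduct, sub_mul, mul_sub, Finset.sum_sub_distrib, Pi.single_apply] at h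
  linarith

-- membership: 1 is in the set
lemma one_mem (n : ℕ) : (1:ℝ) ∈ {x : ℝ | ∃ Q Qhat : Matrix (Fin (n + 1)) (Fin (n + 1)) ℝ,
    Q.PosSemidef ∧ IsToeplitz Q ∧ Qhat.PosSemidef ∧ IsToeplitz Qhat ∧
    allOnes (n+1) + Q = halfOffDiag (n+1) + Qhat ∧ x = Q 0 0 + Qhat 0 0} := by
  refine ⟨Matrix.of fun i j => if i = j then (1/2:ℝ) else 0,
          Matrix.of fun _ _ => (1/2:ℝ), ?_, ?_, ?_, ?_, ?_, by norm_num⟩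
  · refine Matrix.PosSemidef.of_dotProduct_mulVec_nonneg ?_ ?_
    · show _ᴴ = _; ext i j; simp [conjTranspose_apply, eq_comm]
    · intro x
      have : (Matrix.of fun i j => if i = j then (1/2:ℝ) else 0) *ᵥ x = fun k => (1/2) * x k := by
        funext k; simp [mulVec, dotProduct, ite_mul]
      rw [this]
      simp only [star_trivial, dotProduct]
      refine Finset.sum_nonneg fun k _ => ?_
      have := mul_self_nonneg (x k); nlinarith
  · intro i j i' j' h
    have : (i = j) ↔ (i' = j') := by
      constructor <;> intro e <;> subst e <;> [skip; skip] <;> apply Fin.ext <;> omega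
    simp only [Matrix.of_apply]
    by_cases e : i = j
    · rw [if_pos e, if_pos (this.mp e)]
    · rw [if_neg e, if_neg (fun e' => e (this.mpr e'))]
  · refine Matrix.PosSemidef.of_dotProduct_mulVec_nonneg ?_ ?_
    · show _ᴴ = _; ext i j; simp [conjTranspose_apply]
    · intro x
      have : (Matrix.of fun _ _ => (1/2:ℝ) : Matrix (Fin (n+1)) (Fin (n+1)) ℝ) *ᵥ x = fun _ => (1/2) * ∑ l, x l := by
        funext k; simp [mulVec, dotProduct, Finset.mul_sum]
      rw [this]
      simp only [star_trivial, dotProduct, ← Finset.sum_mul]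
      nlinarith [sq_nonneg (∑ l, x l)]
  · intro i j i' j' _; rfl
  · ext i j
    by_cases e : i = j <;> simp [allOnes, halfOffDiag, e] <;> norm_num

lemma lower_bound (n : ℕ) {x : ℝ} (hx : x ∈ {x : ℝ | ∃ Q Qhat : Matrix (Fin (n + 1)) (Fin (n + 1)) ℝ,
    Q.PosSemidef ∧ IsToeplitz Q ∧ Qhat.PosSemidef ∧ IsToeplitz Qhat ∧
    allOnes (n+1) + Q = halfOffDiag (n+1) + Qhat ∧ x = Q 0 0 + Qhat 0 0}) :
    (n : ℝ) / (n + 1) ≤ x := by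
  obtain ⟨Q, Qhat, hQ, hTQ, hQh, hTQh, heq, hxval⟩ := hx
  have hrel : ∀ i j, Qhat i j = Q i j + (if i = j then (0:ℝ) else 1/2) := by
    intro i j
    have h := congrFun (congrFun heq i) j
    simp only [Matrix.add_apply, allOnes, halfOffDiag, Matrix.of_apply] at h
    by_cases e : i = j <;> simp [e] at h ⊢ <;> linarith
  have hdQh : ∀ i : Fin (n+1), Qhat i i = Q 0 0 := by
    intro i
    have h1 : Qhat i i = Qhat 0 0 := hTQh i i 0 0 (by ring)
    have h2 : Qhat 0 0 = Q 0 0 := by simpa using hrel 0 0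
    rw [h1, h2]
  set s : ℝ := ∑ i, ∑ j, Q i j with hs_def
  have hs : 0 ≤ s := by
    have h := hQ.dotProduct_mulVec_nonneg (fun _ => 1)
    simpa [dotProduct, mulVec, hs_def] using h
  have hhat : ∑ i, ∑ j, Qhat i j = s + (n:ℝ)*(n+1)/2 := by
    have hiter : ∀ i : Fin (n+1), ∑ j, (if i = j then (0:ℝ) else 1/2) = (n:ℝ)/2 := by
      intro i
      have : ∀ j : Fin (n+1), (if i = j then (0:ℝ) else 1/2) = 1/2 - (if i = j then (1/2:ℝ) else 0) := by
        intro j; split <;> ring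
      simp only [this, Finset.sum_sub_distrib, Finset.sum_const, Finset.card_univ,
        Fintype.card_fin, nsmul_eq_mul, Finset.sum_ite_eq, Finset.mem_univ, if_true]
      push_cast; ring
    simp only [hrel, Finset.sum_add_distrib, hiter, Finset.sum_const, Finset.card_univ,
      Fintype.card_fin, nsmul_eq_mul, ← hs_def]
    push_cast; ring
  have hswap : ∑ i : Fin (n+1), ∑ j, Qhat j i = ∑ i, ∑ j, Qhat i j := Finset.sum_comm
  have hsum : (0:ℝ) ≤ ∑ i, ∑ j, (Qhat i i + Qhat j j - Qhat i j - Qhat j i) :=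
    Finset.sum_nonneg fun i _ => Finset.sum_nonneg fun j _ => quad_pair Qhat hQh i j
  have hexp : ∑ i, ∑ j, (Qhat i i + Qhat j j - Qhat i j - Qhat j i)
      = 2*((n:ℝ)+1)^2 * Q 0 0 - 2*(s + (n:ℝ)*(n+1)/2) := by
    simp only [sub_eq_add_neg, Finset.sum_add_distrib, Finset.sum_neg_distrib, hdQh,
      Finset.sum_const, Finset.card_univ, Fintype.card_fin, nsmul_eq_mul, hswap, hhat]
    push_cast; ring
  rw [hexp] at hsum
  have hx2 : x = 2 * Q 0 0 := by
    rw [hxval, hdQh 0]; ring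
  rw [hx2, div_le_iff₀ (by positivity)]
  nlinarith [hsum, hs]

/-- As `n → ∞`, the Toeplitz covariance distance between the all-ones matrix
`Rₙ` and the matrix `R̂ₙ` (diagonal `1`, off-diagonal `1/2`) tends to `1`. -/
theorem deltaT_allOnes_halfOffDiag_tendsto_one :
    Filter.Tendsto (fun n : ℕ => deltaT n (allOnes (n + 1)) (halfOffDiag (n + 1)))
      Filter.atTop (nhds 1) := by
  have hge : ∀ n : ℕ, (n:ℝ)/(n+1) ≤ deltaT n (allOnes (n + 1)) (halfOffDiag (n + 1)) := by
    intro n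
    exact le_csInf ⟨1, one_mem n⟩ (fun x hx => lower_bound n hx)
  have hle : ∀ n : ℕ, deltaT n (allOnes (n + 1)) (halfOffDiag (n + 1)) ≤ 1 := by
    intro n
    exact csInf_le ⟨(n:ℝ)/(n+1), fun x hx => lower_bound n hx⟩ (one_mem n)
  have h1 : Filter.Tendsto (fun n : ℕ => (n:ℝ)/(n+1)) Filter.atTop (nhds 1) :=
    tendsto_natCast_div_add_atTop 1
  exact tendsto_of_tendsto_of_tendsto_of_le_of_le h1 tendsto_const_nhds hge hle
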